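/- Fix reals ν1, ν2, q with q > 0 and set τ2 = (1+ν1−ν2)/2, τ1 = 1−τ2, τ3 = ν1ν2 + (α+β)(ν1+ν2−1)/2, α1 = α+1+ν1+q, β1 = 1−β−ν2+q, γ1 = 2+2q+α+ν1−ν2, and Λ = τ0 + (1−α)/2 + (α+q)(q+1) + (ν1−ν2)(α+2q+1)/2. Assume γ1 is not zero and not a negative integer, so that (γ1)_k ≠ 0 for all k. Define ψ : (0,1) → ℝ by ψ(x) = x^q (1−x)^{−β} Σ_{k=0}^∞ [(α1)_k (β1)_k / ((γ1)_k k!)] x^k (the series converging for 0 < x < 1). Then for every x ∈ (0,1), (M ψ)(x) = Λ·ψ(x). -/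

import Mathlib

open Filter Topology FormalMultilinearSeries

section HypergeomAux

lemma tendsto_ratio_aux (a b : ℝ) :
    Tendsto (fun k : ℕ => (a + k) / (b + k)) atTop (𝓝 1) := by
  have hb : Tendsto (fun k : ℕ => b + (k : ℝ)) atTop atTop :=
    tendsto_atTop_add_const_left _ b tendsto_natCast_atTop_atTop
  have h0 : Tendsto (fun k : ℕ => (a - b) / (b + k)) atTop (𝓝 0) :=
    Tendsto.div_atTop tendsto_const_nhds hb
  have h1 : Tendsto (fun k : ℕ => 1 + (a - b) / (b + k)) atTop (𝓝 1) := by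
    simpa using tendsto_const_nhds.add h0
  apply h1.congr'
  filter_upwards [hb.eventually_gt_atTop 0] with k hk
  field_simp
  ring

lemma aux_shift (c : ℕ → ℝ)
    (H : ∀ r : ℝ, 0 ≤ r → r < 1 → Summable (fun k => |c k| * r ^ k)) :
    ∀ r : ℝ, 0 ≤ r → r < 1 →
      Summable (fun k : ℕ => |((k : ℝ) + 1) * c (k + 1)| * r ^ k) := by
  intro r hr0 hr1
  set ρ : ℝ := (r + 1) / 2 with hρ
  have hρ0 : 0 < ρ := by positivity
  have hrρ : r < ρ := by rw [hρ]; linarith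
  have hρ1 : ρ < 1 := by rw [hρ]; linarith
  have hsum := H ρ (le_of_lt hρ0) hρ1
  clear hρ; clear_value ρ
  have hbdd : BddAbove (Set.range fun k => |c k| * ρ ^ k) :=
    hsum.tendsto_atTop_zero.bddAbove_range
  obtain ⟨C, hC⟩ := hbdd
  have hCk : ∀ k, |c k| * ρ ^ k ≤ C := fun k => hC (Set.mem_range_self k)
  have hsum2 : Summable (fun k : ℕ => (C / ρ) * (((k : ℝ) + 1) * (r / ρ) ^ k)) := by
    apply Summable.mul_left
    have h1 : Summable (fun k : ℕ => (k : ℝ) * (r / ρ) ^ k) := by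
      have := summable_pow_mul_geometric_of_norm_lt_one 1
        (r := r / ρ) (by rw [Real.norm_eq_abs, abs_of_nonneg (by positivity)]
                         exact (div_lt_one hρ0).2 hrρ)
      simpa using this
    have h2 : Summable (fun k : ℕ => (r / ρ) ^ k) :=
      summable_geometric_of_lt_one (by positivity) ((div_lt_one hρ0).2 hrρ)
    simpa [add_mul, one_mul] using h1.add h2
  apply Summable.of_nonneg_of_le (fun k => by positivity) _ hsum2
  intro k
  have hck : |c (k + 1)| ≤ C / ρ ^ (k + 1) := by
    rw [le_div_iff₀ (by positivity)]
    exact hCk (k + 1)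
  have habs : |((k : ℝ) + 1) * c (k + 1)| = ((k : ℝ) + 1) * |c (k + 1)| := by
    rw [abs_mul, abs_of_nonneg (by positivity)]
  rw [habs]
  have hrpow : (0:ℝ) ≤ r ^ k := by positivity
  calc ((k : ℝ) + 1) * |c (k + 1)| * r ^ k
      ≤ ((k : ℝ) + 1) * (C / ρ ^ (k + 1)) * r ^ k := by
        apply mul_le_mul_of_nonneg_right (mul_le_mul_of_nonneg_left hck (by positivity)) hrpow
    _ = C / ρ * (((k : ℝ) + 1) * (r / ρ) ^ k) := by
        have hρne : ρ ≠ 0 := ne_of_gt hρ0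
        rw [div_pow, pow_succ]
        field_simp

lemma aux_summable (c : ℕ → ℝ)
    (H : ∀ r : ℝ, 0 ≤ r → r < 1 → Summable (fun k => |c k| * r ^ k))
    {y : ℝ} (hy : |y| < 1) : Summable (fun k : ℕ => c k * y ^ k) := by
  have h := H |y| (abs_nonneg y) hy
  apply Summable.of_abs
  have : (fun k : ℕ => |c k * y ^ k|) = fun k => |c k| * |y| ^ k := by
    funext k; rw [abs_mul, abs_pow]
  rwa [this]

lemma aux_hasDeriv (c : ℕ → ℝ)
    (H : ∀ r : ℝ, 0 ≤ r → r < 1 → Summable (fun k => |c k| * r ^ k))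
    {x : ℝ} (hx0 : 0 < x) (hx1 : x < 1) :
    HasDerivAt (fun y : ℝ => ∑' k : ℕ, c k * y ^ k)
      (∑' k : ℕ, ((k : ℝ) + 1) * c (k + 1) * x ^ k) x := by
  set p : FormalMultilinearSeries ℝ ℝ ℝ := ofScalars ℝ c with hp
  have hcoeff : ∀ n, p.coeff n = c n := by
    intro n
    have h1 : (1 : Fin n → ℝ) = fun _ => (1 : ℝ) := rfl
    rw [hp, FormalMultilinearSeries.coeff, h1, ofScalars_apply_eq]
    simp
  have hrad : 1 ≤ p.radius := by
    apply ENNReal.le_of_forall_nnreal_lt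
    intro r hr
    have hr1 : (r : ℝ) < 1 := by exact_mod_cast hr
    apply p.le_radius_of_summable_norm
    have heq : (fun n => ‖p n‖ * (r : ℝ) ^ n) = fun n => |c n| * (r : ℝ) ^ n := by
      funext n
      rw [hp, ofScalars_norm, Real.norm_eq_abs]
    rw [heq]
    exact H r r.coe_nonneg hr1
  have hball : HasFPowerSeriesOnBall (fun y : ℝ => ∑' k : ℕ, c k * y ^ k) p 0 1 := by
    refine ⟨hrad, one_pos, ?_⟩
    intro y hy
    rw [EMetric.mem_ball, edist_zero_right] at hy
    have hy1 : |y| < 1 := by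
      rw [← Real.norm_eq_abs]
      have h' : ‖y‖₊ < 1 := enorm_lt_coe.1 (by simpa using hy)
      exact_mod_cast h'
    have hs := (aux_summable c H hy1).hasSum
    simp only [zero_add]
    convert hs using 2 with n
    · rfl
    simp [hp, ofScalars_apply_eq, smul_eq_mul]
    ring
  have hxball : x ∈ Metric.eball (0 : ℝ) 1 := by
    rw [EMetric.mem_ball, edist_zero_right]
    have : ‖x‖ < 1 := by rw [Real.norm_eq_abs, abs_of_pos hx0]; exact hx1
    have h' : ‖x‖₊ < 1 := by exact_mod_cast this
    simpa using enorm_lt_coe.2 h'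
  have hdiff : DifferentiableAt ℝ (fun y : ℝ => ∑' k : ℕ, c k * y ^ k) x := by
    have := hball.analyticOnNhd x (by simpa using hxball)
    exact this.differentiableAt
  have hfd : HasFPowerSeriesOnBall (fderiv ℝ (fun y : ℝ => ∑' k : ℕ, c k * y ^ k))
      p.derivSeries 0 1 := hball.fderiv
  have hsum := hfd.hasSum hxball
  simp only [zero_add] at hsum
  -- apply at x
  have hsum2 := (ContinuousLinearMap.apply ℝ ℝ x).hasSum hsum
  simp only [ContinuousLinearMap.apply_apply] at hsum2
  have hdiag : ∀ n : ℕ, p.derivSeries n (fun _ => x) x = ((n : ℝ) + 1) * c (n + 1) * x ^ (n + 1) := by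
    intro n
    rw [derivSeries_apply_diag]
    simp [hp, ofScalars_apply_eq, smul_eq_mul]
    ring
  rw [funext hdiag] at hsum2
  have hfx : fderiv ℝ (fun y : ℝ => ∑' k : ℕ, c k * y ^ k) x x
      = x * deriv (fun y : ℝ => ∑' k : ℕ, c k * y ^ k) x := by
    have h := (fderiv ℝ (fun y : ℝ => ∑' k : ℕ, c k * y ^ k) x).map_smul x (1 : ℝ)
    simp only [smul_eq_mul, mul_one] at h
    rw [h, fderiv_apply_one_eq_deriv]
  rw [hfx] at hsum2
  have hdivsum : HasSum (fun k : ℕ => ((k : ℝ) + 1) * c (k + 1) * x ^ k)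
      (deriv (fun y : ℝ => ∑' k : ℕ, c k * y ^ k) x) := by
    have h2 := hsum2.div_const x
    have hxne : x ≠ 0 := ne_of_gt hx0
    rw [mul_div_cancel_left₀ _ hxne] at h2
    convert h2 using 2 with k
    · rfl
    rw [pow_succ]
    field_simp
  rw [hdivsum.tsum_eq]
  exact hdiff.hasDerivAt

lemma aux_ode (c : ℕ → ℝ) (α1 β1 γ1 x G G1 G2 : ℝ)
    (hrec : ∀ k : ℕ, ((k : ℝ) + 1) * (γ1 + k) * c (k + 1) = (α1 + k) * (β1 + k) * c k)
    (h0 : HasSum (fun k : ℕ => c k * x ^ k) G)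
    (h1 : HasSum (fun k : ℕ => ((k : ℝ) + 1) * c (k + 1) * x ^ k) G1)
    (h2 : HasSum (fun k : ℕ => ((k : ℝ) + 1) * (((k : ℝ) + 2) * c (k + 2)) * x ^ k) G2) :
    x * (1 - x) * G2 + (γ1 - (α1 + β1 + 1) * x) * G1 - α1 * β1 * G = 0 := by
  -- shifted sums
  have hu : HasSum (fun k : ℕ => (k : ℝ) * ((k : ℝ) + 1) * c (k + 1) * x ^ k) (x * G2) := by
    have h := h2.mul_left x
    rw [← hasSum_nat_add_iff' 1]
    simp only [Finset.range_one, Finset.sum_singleton]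
    norm_num
    convert h using 2 with k
    · rfl
    push_cast
    ring
  have hv : HasSum (fun k : ℕ => (k : ℝ) * ((k : ℝ) - 1) * c k * x ^ k) (x ^ 2 * G2) := by
    have h := h2.mul_left (x ^ 2)
    rw [← hasSum_nat_add_iff' 2]
    simp only [Finset.sum_range_succ, Finset.range_one, Finset.sum_singleton]
    norm_num
    convert h using 2 with k
    · rfl
    push_cast
    ring
  have hw : HasSum (fun k : ℕ => (k : ℝ) * c k * x ^ k) (x * G1) := by
    have h := h1.mul_left x
    rw [← hasSum_nat_add_iff' 1]
    simp only [Finset.range_one, Finset.sum_singleton]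
    norm_num
    convert h using 2 with k
    · rfl
    push_cast
    ring
  have hbig := (((hu.sub hv).add (h1.mul_left γ1)).sub (hw.mul_left (α1 + β1 + 1))).sub
    (h0.mul_left (α1 * β1))
  have hzero : (fun k : ℕ => ((k : ℝ) * ((k : ℝ) + 1) * c (k + 1) * x ^ k
      - (k : ℝ) * ((k : ℝ) - 1) * c k * x ^ k
      + γ1 * (((k : ℝ) + 1) * c (k + 1) * x ^ k)
      - (α1 + β1 + 1) * ((k : ℝ) * c k * x ^ k))
      - α1 * β1 * (c k * x ^ k)) = fun _ => (0 : ℝ) := by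
    funext k
    have h := hrec k
    linear_combination x ^ k * h
  rw [hzero] at hbig
  have := hasSum_zero.unique hbig
  linear_combination - this

end HypergeomAux


/-- The Pochhammer symbol `(c)_k = c(c+1)⋯(c+k-1)` for a real `c`. -/
noncomputable def poch (c : ℝ) (k : ℕ) : ℝ := ∏ i ∈ Finset.range k, (c + i)

/-- The tridiagonalized operator in explicit form. -/
noncomputable def Mfun (α β τ0 τ2 τ3 : ℝ) (f : ℝ → ℝ) (x : ℝ) : ℝ :=
  x ^ 2 * (1 - x) * deriv (deriv f) x
    + x * (α + 1 + 2 * τ2 - (α + β + 2 + 2 * τ2) * x) * deriv f x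
    + (-(τ2 * (α + β + 2) - τ3) * x + (α + 1) * τ2 + τ0) * f x

/-- The function `ψ(x) = x^q (1-x)^{-β} ₂F₁(α1, β1; γ1; x)` is an eigenfunction of `M`
on `(0,1)` with eigenvalue `Λ = τ0 + (1-α)/2 + (α+q)(q+1) + (ν1-ν2)(α+2q+1)/2`. -/
theorem M_hypergeometric_eigenfunction (α β τ0 ν1 ν2 q : ℝ) (hq : 0 < q)
    (τ1 τ2 τ3 α1 β1 γ1 Λ : ℝ)
    (hτ2 : τ2 = (1 + ν1 - ν2) / 2) (hτ1 : τ1 = 1 - τ2)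
    (hτ3 : τ3 = ν1 * ν2 + (α + β) * (ν1 + ν2 - 1) / 2)
    (hα1 : α1 = α + 1 + ν1 + q) (hβ1 : β1 = 1 - β - ν2 + q)
    (hγ1 : γ1 = 2 + 2 * q + α + ν1 - ν2)
    (hΛ : Λ = τ0 + (1 - α) / 2 + (α + q) * (q + 1) + (ν1 - ν2) * (α + 2 * q + 1) / 2)
    (hγ : ∀ k : ℕ, γ1 + (k : ℝ) ≠ 0) :
    ∀ x ∈ Set.Ioo (0 : ℝ) 1,
      Mfun α β τ0 τ2 τ3
        (fun t => t ^ q * (1 - t) ^ (-β) *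
          ∑' k : ℕ, (poch α1 k * poch β1 k / (poch γ1 k * (Nat.factorial k : ℝ))) * t ^ k) x
      = Λ * (x ^ q * (1 - x) ^ (-β) *
          ∑' k : ℕ, (poch α1 k * poch β1 k / (poch γ1 k * (Nat.factorial k : ℝ))) * x ^ k) := by
  intro x hx
  obtain ⟨hx0, hx1⟩ := hx
  have h1x : (0:ℝ) < 1 - x := by linarith
  set c : ℕ → ℝ := fun k => poch α1 k * poch β1 k / (poch γ1 k * (Nat.factorial k : ℝ)) with hc
  -- recurrence
  have hpochγ : ∀ k, poch γ1 k ≠ 0 := by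
    intro k
    rw [poch]
    exact Finset.prod_ne_zero_iff.2 fun i _ => hγ i
  have hrec : ∀ k : ℕ, ((k:ℝ)+1) * (γ1 + k) * c (k+1) = (α1 + k) * (β1 + k) * c k := by
    intro k
    have e1 : poch α1 (k+1) = poch α1 k * (α1 + k) := Finset.prod_range_succ _ _
    have e2 : poch β1 (k+1) = poch β1 k * (β1 + k) := Finset.prod_range_succ _ _
    have e3 : poch γ1 (k+1) = poch γ1 k * (γ1 + k) := Finset.prod_range_succ _ _
    have hf : ((Nat.factorial k : ℕ) : ℝ) ≠ 0 := Nat.cast_ne_zero.2 (Nat.factorial_ne_zero k)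
    have hγk := hγ k
    have hk1 : ((k:ℝ)+1) ≠ 0 := by positivity
    have hpk : poch γ1 k ≠ 0 := hpochγ k
    simp only [hc, e1, e2, e3, Nat.factorial_succ]
    push_cast
    field_simp
  -- explicit ratio form
  have hcrat : ∀ k : ℕ, c (k+1) = (α1 + k) * (β1 + k) * c k / (((k:ℝ)+1) * (γ1 + k)) := by
    intro k
    have hk1 : ((k:ℝ)+1) ≠ 0 := by positivity
    rw [eq_div_iff (mul_ne_zero hk1 (hγ k))]
    linear_combination hrec k
  -- summability
  have H : ∀ r : ℝ, 0 ≤ r → r < 1 → Summable (fun k => |c k| * r ^ k) := by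
    intro r hr0 hr1
    apply summable_of_ratio_norm_eventually_le (r := (r+1)/2) (by linarith)
    have hlim : Tendsto (fun k : ℕ =>
        r * |((α1 + k) / (1 + k)) * ((β1 + k) / (γ1 + k))|) atTop (𝓝 r) := by
      have hin : Tendsto (fun k : ℕ => ((α1 + k) / (1 + k)) * ((β1 + k) / (γ1 + k)))
          atTop (𝓝 1) := by
        have := (tendsto_ratio_aux α1 1).mul (tendsto_ratio_aux β1 γ1)
        simpa using this
      have habs := hin.abs
      simp only [abs_one] at habs
      simpa using (tendsto_const_nhds (x := r)).mul habs
    have hev := hlim.eventually_lt_const (show r < (r+1)/2 by linarith)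
    filter_upwards [hev] with k hk
    have hk1 : (0:ℝ) < (k:ℝ)+1 := by positivity
    have h1k : |(1:ℝ) + (k:ℝ)| = (k:ℝ) + 1 := by
      rw [abs_of_pos (by positivity)]; ring
    have hγk : γ1 + (k:ℝ) ≠ 0 := hγ k
    have hk1' : (1:ℝ) + (k:ℝ) ≠ 0 := by positivity
    have hinner : (((α1 + (k:ℝ)) / (1 + (k:ℝ))) * ((β1 + (k:ℝ)) / (γ1 + (k:ℝ)))) * c k
        = (α1 + (k:ℝ)) * (β1 + (k:ℝ)) * c k / (((k:ℝ)+1) * (γ1 + (k:ℝ))) := by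
      rw [div_mul_div_comm, div_mul_eq_mul_div, add_comm (1:ℝ) ((k:ℕ):ℝ)]
    have key : |c (k+1)| * r^(k+1)
        = (r * |((α1 + k) / (1 + k)) * ((β1 + k) / (γ1 + k))|) * (|c k| * r^k) := by
      rw [hcrat k, ← hinner, pow_succ, abs_mul]
      ring
    have hnn1 : (0:ℝ) ≤ |c k| * r ^ k := by positivity
    rw [Real.norm_eq_abs, Real.norm_eq_abs, abs_of_nonneg (by positivity),
      abs_of_nonneg hnn1, key]
    exact mul_le_mul_of_nonneg_right hk.le hnn1
  -- derived coefficient sequences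
  set c1 : ℕ → ℝ := fun k => ((k:ℝ)+1) * c (k+1) with hc1
  set c2 : ℕ → ℝ := fun k => ((k:ℝ)+1) * c1 (k+1) with hc2
  have H1 : ∀ r : ℝ, 0 ≤ r → r < 1 → Summable (fun k => |c1 k| * r ^ k) := aux_shift c H
  have H2 : ∀ r : ℝ, 0 ≤ r → r < 1 → Summable (fun k => |c2 k| * r ^ k) := aux_shift c1 H1
  set S : ℝ → ℝ := fun t => ∑' k : ℕ, c k * t ^ k with hS
  set S1 : ℝ → ℝ := fun t => ∑' k : ℕ, c1 k * t ^ k with hS1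
  set S2 : ℝ → ℝ := fun t => ∑' k : ℕ, c2 k * t ^ k with hS2
  have hDS : ∀ y ∈ Set.Ioo (0:ℝ) 1, HasDerivAt S (S1 y) y := by
    intro y hy
    exact aux_hasDeriv c H hy.1 hy.2
  have hDS1 : ∀ y ∈ Set.Ioo (0:ℝ) 1, HasDerivAt S1 (S2 y) y := by
    intro y hy
    exact aux_hasDeriv c1 H1 hy.1 hy.2
  have hxmem : x ∈ Set.Ioo (0:ℝ) 1 := ⟨hx0, hx1⟩
  have habsx : |x| < 1 := by rw [abs_of_pos hx0]; exact hx1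
  -- HasSum facts at x
  have hsum0 : HasSum (fun k : ℕ => c k * x ^ k) (S x) := (aux_summable c H habsx).hasSum
  have hsum1 : HasSum (fun k : ℕ => ((k:ℝ)+1) * c (k+1) * x ^ k) (S1 x) :=
    (aux_summable c1 H1 habsx).hasSum
  have hsum2 : HasSum (fun k : ℕ => ((k:ℝ)+1) * (((k:ℝ)+2) * c (k+2)) * x ^ k) (S2 x) := by
    have heq : (fun k : ℕ => c2 k * x ^ k)
        = fun k : ℕ => ((k:ℝ)+1) * (((k:ℝ)+2) * c (k+2)) * x ^ k := by
      funext k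
      simp only [hc2, hc1]
      push_cast
      ring
    rw [← heq]
    exact (aux_summable c2 H2 habsx).hasSum
  have ode : x * (1 - x) * S2 x + (γ1 - (α1 + β1 + 1) * x) * S1 x - α1 * β1 * S x = 0 :=
    aux_ode c α1 β1 γ1 x (S x) (S1 x) (S2 x) hrec hsum0 hsum1 hsum2
  -- elementary derivative facts
  have hX : ∀ y : ℝ, 0 < y → HasDerivAt (fun t : ℝ => t ^ q) (q * y ^ (q-1)) y := by
    intro y hy
    exact Real.hasDerivAt_rpow_const (Or.inl (ne_of_gt hy))
  have hX1 : HasDerivAt (fun t : ℝ => t ^ (q-1)) ((q-1) * x ^ (q-2)) x := by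
    have h := Real.hasDerivAt_rpow_const (x := x) (p := q - 1) (Or.inl (ne_of_gt hx0))
    rw [show q - 1 - 1 = q - 2 by ring] at h
    exact h
  have hw : ∀ y : ℝ, y < 1 → HasDerivAt (fun t : ℝ => (1 - t) ^ (-β)) (β * (1 - y) ^ (-β-1)) y := by
    intro y hy
    have h1 : HasDerivAt (fun t : ℝ => 1 - t) (-1) y := (hasDerivAt_id y).const_sub 1
    have hne : (1:ℝ) - y ≠ 0 := ne_of_gt (by linarith)
    have h2 := h1.rpow_const (p := -β) (Or.inl hne)
    convert h2 using 1
    ring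
  have hw1 : HasDerivAt (fun t : ℝ => (1 - t) ^ (-β-1)) ((β+1) * (1 - x) ^ (-β-2)) x := by
    have h1 : HasDerivAt (fun t : ℝ => 1 - t) (-1) x := (hasDerivAt_id x).const_sub 1
    have hne : (1:ℝ) - x ≠ 0 := ne_of_gt (by linarith)
    have h2 := h1.rpow_const (p := -β-1) (Or.inl hne)
    rw [show -β - 1 - 1 = -β - 2 by ring] at h2
    convert h2 using 1
    ring
  -- the function and its first derivative
  set ψa : ℝ → ℝ := fun t => t ^ q * ((1 - t) ^ (-β) * S t) with hψa
  set Φ : ℝ → ℝ := fun y => q * y ^ (q-1) * ((1 - y) ^ (-β) * S y)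
    + y ^ q * (β * (1 - y) ^ (-β-1) * S y + (1 - y) ^ (-β) * S1 y) with hΦ
  have hDψ : ∀ y ∈ Set.Ioo (0:ℝ) 1, HasDerivAt ψa (Φ y) y := by
    intro y hy
    exact (hX y hy.1).mul ((hw y hy.2).mul (hDS y hy))
  have hd1 : deriv ψa x = Φ x := (hDψ x hxmem).deriv
  have hSx := hDS x hxmem
  have hS1x := hDS1 x hxmem
  have hΦder : HasDerivAt Φ
      ((q * ((q-1) * x ^ (q-2))) * ((1 - x) ^ (-β) * S x)
        + (q * x ^ (q-1)) * (β * (1 - x) ^ (-β-1) * S x + (1 - x) ^ (-β) * S1 x)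
      + ((q * x ^ (q-1)) * (β * (1 - x) ^ (-β-1) * S x + (1 - x) ^ (-β) * S1 x)
        + x ^ q * ((β * ((β+1) * (1 - x) ^ (-β-2))) * S x + (β * (1 - x) ^ (-β-1)) * S1 x
          + (β * (1 - x) ^ (-β-1) * S1 x + (1 - x) ^ (-β) * S2 x)))) x := by
    exact ((hX1.const_mul q).mul ((hw x hx1).mul hSx)).add
      ((hX x hx0).mul ((((hw1).const_mul β).mul hSx).add ((hw x hx1).mul hS1x)))
  have hd2 : deriv (deriv ψa) x
      = ((q * ((q-1) * x ^ (q-2))) * ((1 - x) ^ (-β) * S x)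
        + (q * x ^ (q-1)) * (β * (1 - x) ^ (-β-1) * S x + (1 - x) ^ (-β) * S1 x)
      + ((q * x ^ (q-1)) * (β * (1 - x) ^ (-β-1) * S x + (1 - x) ^ (-β) * S1 x)
        + x ^ q * ((β * ((β+1) * (1 - x) ^ (-β-2))) * S x + (β * (1 - x) ^ (-β-1)) * S1 x
          + (β * (1 - x) ^ (-β-1) * S1 x + (1 - x) ^ (-β) * S2 x)))) := by
    have heq : deriv ψa =ᶠ[𝓝 x] Φ := by
      filter_upwards [Ioo_mem_nhds hx0 hx1] with y hy
      exact (hDψ y hy).deriv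
    rw [heq.deriv_eq]
    exact hΦder.deriv
  -- rewrite the goal
  have hassoc : (fun t : ℝ => t ^ q * (1 - t) ^ (-β) * S t) = ψa := by
    funext t
    rw [hψa]
    ring
  show Mfun α β τ0 τ2 τ3 (fun t => t ^ q * (1 - t) ^ (-β) * S t) x
      = Λ * (x ^ q * (1 - x) ^ (-β) * S x)
  rw [hassoc]
  simp only [Mfun]
  rw [hd1, hd2]
  have hψax : ψa x = x ^ q * ((1 - x) ^ (-β) * S x) := rfl
  have hΦx : Φ x = q * x ^ (q-1) * ((1 - x) ^ (-β) * S x)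
    + x ^ q * (β * (1 - x) ^ (-β-1) * S x + (1 - x) ^ (-β) * S1 x) := rfl
  rw [hψax, hΦx]
  -- rpow decompositions
  have e1 : x ^ q = x ^ (q-2) * x ^ (2:ℕ) := by
    rw [← Real.rpow_natCast x 2, ← Real.rpow_add hx0]
    norm_num
  have e2 : x ^ (q-1) = x ^ (q-2) * x := by
    have h : q - 1 = q - 2 + 1 := by ring
    rw [h, Real.rpow_add hx0, Real.rpow_one]
  have e3 : (1-x) ^ (-β) = (1-x) ^ (-β-2) * (1-x) ^ (2:ℕ) := by
    rw [← Real.rpow_natCast (1-x) 2, ← Real.rpow_add h1x]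
    norm_num
  have e4 : (1-x) ^ (-β-1) = (1-x) ^ (-β-2) * (1-x) := by
    have h : -β - 1 = -β - 2 + 1 := by ring
    rw [h, Real.rpow_add h1x, Real.rpow_one]
  rw [e1, e2, e3, e4]
  set P : ℝ := x ^ (q-2) with hP
  set W : ℝ := (1-x) ^ (-β-2) with hW
  set G : ℝ := S x with hG
  set G1 : ℝ := S1 x with hG1
  set G2 : ℝ := S2 x with hG2
  subst hτ2 hτ3 hα1 hβ1 hγ1 hΛ
  linear_combination (P * x^3 * W * (1-x)^2) * ode
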